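/- Let G be a finite connected simple graph with m ≥ 2 vertices and n edges, let S be a vertex of G, and let T be a spanning tree of G. Then the edgewise Kirchhoff matrix M_{G,S,T} is invertible (its determinant is nonzero); consequently, for every right-hand side the corresponding system of n linear equations in the n edge variables has a unique solution. -/

import Mathlib

open SimpleGraph

/-- The edges of `G`, each oriented from its smaller endpoint to its larger endpoint. -/
abbrev OrientedEdge {V : Type*} [LinearOrder V] (G : SimpleGraph V) : Type _ :=
  {e : V × V // e.1 < e.2 ∧ G.Adj e.1 e.2}

/-- Row indices of the edgewise Kirchhoff matrix: the vertices `w ≠ S` together with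
the (oriented) edges of `G` not belonging to `T`. -/
abbrev KirchhoffRow {V : Type*} [LinearOrder V] (G T : SimpleGraph V) (S : V) : Type _ :=
  {w : V // w ≠ S} ⊕ {e : OrientedEdge G // ¬ T.Adj e.1.1 e.1.2}

/-- `M` is the edgewise Kirchhoff matrix of `G` with respect to the pole `S` and the
spanning tree `T`:  the row of a vertex `w ≠ S` has entry `+1` in the column of each
edge oriented into `w`, `-1` in the column of each edge oriented out of `w`, and `0`
elsewhere; the row of an edge `f ∉ T` oriented `u → v` has entry `+1` in the column of
`f`, entry `+1` (resp. `-1`) in the column of every edge of `T` traversed forwards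
(resp. backwards) by the unique path in `T` from `v` to `u`, and `0` elsewhere. -/
def IsEdgewiseKirchhoffMatrix {V : Type*} [LinearOrder V] (G T : SimpleGraph V) (S : V)
    (M : Matrix (KirchhoffRow G T S) (OrientedEdge G) ℚ) : Prop :=
  (∀ (w : {w : V // w ≠ S}) (g : OrientedEdge G),
      M (Sum.inl w) g =
        if g.1.2 = w.1 then 1 else if g.1.1 = w.1 then -1 else 0) ∧
  (∀ (f : {e : OrientedEdge G // ¬ T.Adj e.1.1 e.1.2}) (g : OrientedEdge G)
      (P : T.Walk f.1.1.2 f.1.1.1), P.IsPath →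
      M (Sum.inr f) g =
        if g = f.1 then 1
        else if (g.1.1, g.1.2) ∈ P.darts.map SimpleGraph.Dart.toProd then 1
        else if (g.1.2, g.1.1) ∈ P.darts.map SimpleGraph.Dart.toProd then -1
        else 0)

/-!
A vector `ω` in the kernel of `M` satisfies Kirchhoff's current law at every vertex other than
the pole, hence also at the pole: it is a circulation. A circulation vanishing off a forest
vanishes, because each forest edge is the only forest edge crossing a suitable cut. So `ω` equals
`∑ f, ω f • C f`, where `C f` is the fundamental cycle of the non-tree edge `f`, and the cycle rows
`C f ⬝ᵥ ω = 0` give `ω ⬝ᵥ ω = 0`. Since a spanning tree has `m - 1` edges, `M` is square, and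
injectivity makes it invertible.
-/

open Matrix

theorem SimpleGraph.Walk.IsTrail.swap_notMem_map_toProd_darts {V : Type*} {T : SimpleGraph V}
    {a b x y : V} {p : T.Walk a b} (hp : p.IsTrail) (h : (x, y) ∈ p.darts.map Dart.toProd) :
    (y, x) ∉ p.darts.map Dart.toProd := by
  intro h'
  obtain ⟨d, hd, hdxy⟩ := List.mem_map.mp h
  obtain ⟨d', hd', hd'yx⟩ := List.mem_map.mp h'
  obtain rfl : d' = d.symm := Dart.ext _ _ (by simp [hd'yx, Dart.symm, hdxy])
  exact d.symm_ne (List.inj_on_of_nodup_map hp.edges_nodup hd' hd d.edge_symm)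

namespace OrientedEdge

variable {V : Type*} [LinearOrder V] (G : SimpleGraph V)

theorem sym2_injective : Function.Injective fun g : OrientedEdge G => s(g.1.1, g.1.2) := by
  intro g g' h
  rcases Sym2.eq_iff.mp h with ⟨h₁, h₂⟩ | ⟨h₁, h₂⟩
  · exact Subtype.ext (Prod.ext h₁ h₂)
  · exact absurd (h₁ ▸ h₂ ▸ g.2.1) (lt_asymm g'.2.1)

theorem card_eq_card_edgeFinset [Fintype V] [DecidableRel G.Adj] [Fintype G.edgeSet] :
    Fintype.card (OrientedEdge G) = G.edgeFinset.card := by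
  rw [edgeFinset_card]
  refine Fintype.card_of_bijective (f := fun g => ⟨s(g.1.1, g.1.2), g.2.2⟩)
    ⟨fun g g' h => sym2_injective G (congrArg Subtype.val h), ?_⟩
  rintro ⟨e, he⟩
  induction e using Sym2.ind with
  | _ x y =>
    rcases (G.ne_of_adj he).lt_or_gt with hxy | hyx
    · exact ⟨⟨(x, y), hxy, he⟩, rfl⟩
    · exact ⟨⟨(y, x), hyx, he.symm⟩, Subtype.ext Sym2.eq_swap⟩

/-- The coboundary of the indicator function of `A`. -/
def cutVector (A : Finset V) (g : OrientedEdge G) : ℚ :=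
  (if g.1.2 ∈ A then 1 else 0) - (if g.1.1 ∈ A then 1 else 0)

variable {G} in
theorem cutVector_singleton_apply (w : V) (g : OrientedEdge G) :
    cutVector G {w} g = if g.1.2 = w then 1 else if g.1.1 = w then -1 else 0 := by
  have := g.2.1.ne
  unfold cutVector
  split_ifs <;> simp_all

theorem cutVector_eq_sum_singleton (A : Finset V) :
    cutVector G A = ∑ w ∈ A, cutVector G {w} := by
  funext g
  simp [cutVector, Finset.sum_sub_distrib]

theorem cutVector_univ [Fintype V] : cutVector G Finset.univ = 0 := by
  funext g
  simp [cutVector]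

variable {G} in
/-- Every edge of a forest is the only forest edge crossing the cut given by the component
of its head after the edge is deleted. -/
theorem exists_cutVector_eq_single_of_isAcyclic [Fintype V] {T : SimpleGraph V} (hT : T.IsAcyclic)
    {g : OrientedEdge G} (hg : T.Adj g.1.1 g.1.2) :
    ∃ A : Finset V, ∀ g' : OrientedEdge G, T.Adj g'.1.1 g'.1.2 →
      cutVector G A g' = if g' = g then 1 else 0 := by
  classical
  set H := T.deleteEdges {s(g.1.1, g.1.2)}
  have hbridge : ¬ H.Reachable g.1.1 g.1.2 :=
    isBridge_iff.mp (isAcyclic_iff_forall_isBridge.mp hT hg)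
  refine ⟨Finset.univ.filter (H.Reachable · g.1.2), fun g' hg' => ?_⟩
  by_cases hgg : g' = g
  · subst hgg
    simp [cutVector, hbridge]
  · have hadj : H.Adj g'.1.1 g'.1.2 := by
      refine (deleteEdges_adj ..).mpr ⟨hg', fun h => hgg (sym2_injective G ?_)⟩
      simpa using h
    have hside : H.Reachable g'.1.2 g.1.2 ↔ H.Reachable g'.1.1 g.1.2 :=
      ⟨hadj.reachable.trans, hadj.symm.reachable.trans⟩
    simp [cutVector, hside, hgg]

def edgeFlow (x y : V) (g : OrientedEdge G) : ℚ :=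
  (if g.1 = (x, y) then 1 else 0) - (if g.1 = (y, x) then 1 else 0)

theorem edgeFlow_swap (x y : V) : edgeFlow G y x = -edgeFlow G x y := by
  funext g
  simp [edgeFlow]

def walkFlow {T : SimpleGraph V} {a b : V} (p : T.Walk a b) (g : OrientedEdge G) : ℚ :=
  ((p.darts.map Dart.toProd).count g.1 : ℚ) - (p.darts.map Dart.toProd).count (g.1.2, g.1.1)

variable {G}

theorem walkFlow_nil {T : SimpleGraph V} {a : V} : walkFlow G (Walk.nil : T.Walk a a) = 0 := by
  funext g
  simp [walkFlow]

theorem walkFlow_cons {T : SimpleGraph V} {a b c : V} (h : T.Adj a b) (p : T.Walk b c) :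
    walkFlow G (Walk.cons h p) = edgeFlow G a b + walkFlow G p := by
  funext g
  simp only [walkFlow, edgeFlow, Walk.darts_cons, List.map_cons, List.count_cons, beq_iff_eq,
    Pi.add_apply]
  push_cast
  have : (a, b) = (g.1.2, g.1.1) ↔ g.1 = (b, a) := by
    simp only [Prod.ext_iff]; tauto
  simp only [this, eq_comm (a := (a, b))]
  ring

theorem walkFlow_apply_of_not_adj {T : SimpleGraph V} {a b : V} (p : T.Walk a b)
    {g : OrientedEdge G} (hg : ¬ T.Adj g.1.1 g.1.2) : walkFlow G p g = 0 := by
  have notMem : ∀ {x y : V}, ¬ T.Adj x y → (x, y) ∉ p.darts.map Dart.toProd := by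
    intro x y hxy hmem
    obtain ⟨⟨_, hadj⟩, -, rfl⟩ := List.mem_map.mp hmem
    exact hxy hadj
  simp [walkFlow, List.count_eq_zero.mpr (notMem hg),
    List.count_eq_zero.mpr (notMem fun h => hg h.symm)]

theorem walkFlow_apply_of_isPath {T : SimpleGraph V} {a b : V} {p : T.Walk a b}
    (hp : p.IsPath) (g : OrientedEdge G) :
    walkFlow G p g =
      if g.1 ∈ p.darts.map Dart.toProd then 1
      else if (g.1.2, g.1.1) ∈ p.darts.map Dart.toProd then -1 else 0 := by
  have hnodup : (p.darts.map Dart.toProd).Nodup :=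
    (Walk.darts_nodup_of_support_nodup hp.support_nodup).map Dart.toProd_injective
  have count_eq (x : V × V) : (p.darts.map Dart.toProd).count x =
      if x ∈ p.darts.map Dart.toProd then 1 else 0 := by
    split_ifs with hx
    · exact List.count_eq_one_of_mem hnodup hx
    · exact List.count_eq_zero.mpr hx
  have := hp.isTrail.swap_notMem_map_toProd_darts (x := g.1.1) (y := g.1.2)
  unfold walkFlow
  rw [count_eq, count_eq]
  split_ifs <;> simp_all

def fundamentalCycle {T : SimpleGraph V} (f : OrientedEdge G) (p : T.Walk f.1.2 f.1.1) :
    OrientedEdge G → ℚ :=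
  Pi.single f 1 + walkFlow G p

theorem fundamentalCycle_apply_of_not_adj {T : SimpleGraph V} (f : OrientedEdge G)
    (p : T.Walk f.1.2 f.1.1) {g : OrientedEdge G} (hg : ¬ T.Adj g.1.1 g.1.2) :
    fundamentalCycle f p g = if g = f then 1 else 0 := by
  simp [fundamentalCycle, walkFlow_apply_of_not_adj p hg, Pi.single_apply]

variable [Fintype V] [DecidableRel G.Adj]

theorem cutVector_dotProduct_edgeFlow (A : Finset V) {x y : V} (h : G.Adj x y) :
    cutVector G A ⬝ᵥ edgeFlow G x y = (if y ∈ A then 1 else 0) - (if x ∈ A then 1 else 0) := by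
  wlog hxy : x < y generalizing x y
  · rw [edgeFlow_swap, dotProduct_neg,
      this h.symm ((G.ne_of_adj h).lt_or_gt.resolve_left hxy)]
    ring
  have : edgeFlow G x y = Pi.single ⟨(x, y), hxy, h⟩ 1 := by
    funext g
    have : g.1 ≠ (y, x) := fun hg => lt_asymm hxy (by simpa [hg] using g.2.1)
    simp [edgeFlow, Pi.single_apply, Subtype.ext_iff, this]
  rw [this, dotProduct_single, mul_one]
  rfl

theorem cutVector_dotProduct_walkFlow {T : SimpleGraph V} (hTG : T ≤ G) (A : Finset V)
    {a b : V} (p : T.Walk a b) :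
    cutVector G A ⬝ᵥ walkFlow G p = (if b ∈ A then 1 else 0) - (if a ∈ A then 1 else 0) := by
  induction p with
  | nil => simp [walkFlow_nil]
  | cons h p ih =>
    rw [walkFlow_cons, dotProduct_add, cutVector_dotProduct_edgeFlow A (hTG h), ih]
    ring

variable (G) in
/-- The cycle space of `G`. -/
def circulations : Submodule ℚ (OrientedEdge G → ℚ) where
  carrier := {ω | ∀ w, cutVector G {w} ⬝ᵥ ω = 0}
  add_mem' hω hω' w := by simp [dotProduct_add, hω w, hω' w]
  zero_mem' w := dotProduct_zero _
  smul_mem' c ω hω w := by simp [dotProduct_smul, hω w]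

theorem cutVector_dotProduct_eq_zero_of_mem_circulations {ω : OrientedEdge G → ℚ}
    (hω : ω ∈ circulations G) (A : Finset V) : cutVector G A ⬝ᵥ ω = 0 := by
  rw [cutVector_eq_sum_singleton, sum_dotProduct]
  exact Finset.sum_eq_zero fun w _ => hω w

/-- The conservation laws at all vertices sum to zero, so any one of them follows from the
others. -/
theorem mem_circulations_of_forall_ne {ω : OrientedEdge G → ℚ} (S : V)
    (hω : ∀ w ≠ S, cutVector G {w} ⬝ᵥ ω = 0) : ω ∈ circulations G := by
  have htotal : ∑ w, cutVector G {w} ⬝ᵥ ω = 0 := by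
    rw [← sum_dotProduct, ← cutVector_eq_sum_singleton, cutVector_univ, zero_dotProduct]
  intro w
  by_cases hw : w = S
  · subst hw
    rwa [Finset.sum_eq_single w (fun v _ hv => hω v hv) (by simp)] at htotal
  · exact hω w hw

theorem fundamentalCycle_mem_circulations {T : SimpleGraph V} (hTG : T ≤ G)
    (f : OrientedEdge G) (p : T.Walk f.1.2 f.1.1) : fundamentalCycle f p ∈ circulations G := by
  intro w
  rw [fundamentalCycle, dotProduct_add, dotProduct_single, mul_one,
    cutVector_dotProduct_walkFlow hTG]
  simp [cutVector]

theorem eq_zero_of_mem_circulations_of_isAcyclic {T : SimpleGraph V} (hT : T.IsAcyclic)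
    {ω : OrientedEdge G → ℚ} (hω : ω ∈ circulations G)
    (hoff : ∀ g : OrientedEdge G, ¬ T.Adj g.1.1 g.1.2 → ω g = 0) : ω = 0 := by
  funext g
  by_cases hg : T.Adj g.1.1 g.1.2
  · obtain ⟨A, hA⟩ := exists_cutVector_eq_single_of_isAcyclic hT hg
    calc ω g = Pi.single g 1 ⬝ᵥ ω := by rw [single_dotProduct, one_mul]
      _ = cutVector G A ⬝ᵥ ω := by
        refine Finset.sum_congr rfl fun g' _ => ?_
        by_cases hg' : T.Adj g'.1.1 g'.1.2
        · rw [hA g' hg', Pi.single_apply]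
        · rw [hoff g' hg', mul_zero, mul_zero]
      _ = 0 := cutVector_dotProduct_eq_zero_of_mem_circulations hω A
  · exact hoff g hg

end OrientedEdge

theorem Matrix.det_submatrix_ne_zero_of_mulVec_injective {ι κ K : Type*} [Fintype κ]
    [DecidableEq κ] [Field K] {M : Matrix ι κ K} (hM : Function.Injective M.mulVec)
    (e : ι ≃ κ) : (M.submatrix e.symm id).det ≠ 0 := by
  have hsub (v : κ → K) : M.submatrix e.symm id *ᵥ v = (M *ᵥ v) ∘ e.symm := by
    simpa using submatrix_mulVec_equiv M v e.symm (Equiv.refl κ)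
  have hinj : Function.Injective (M.submatrix e.symm id).mulVec := by
    rw [show (M.submatrix e.symm id).mulVec = (· ∘ e.symm) ∘ M.mulVec from funext hsub]
    exact e.symm.surjective.injective_comp_right.comp hM
  exact ((isUnit_iff_isUnit_det _).mp (mulVec_injective_iff_isUnit.mp hinj)).ne_zero

theorem Matrix.existsUnique_mulVec_eq_of_mulVec_injective {ι κ K : Type*} [Fintype κ]
    [Field K] {M : Matrix ι κ K} (hM : Function.Injective M.mulVec) (e : ι ≃ κ) (c : ι → K) :
    ∃! v, M *ᵥ v = c := by
  have : Fintype ι := Fintype.ofEquiv κ e.symm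
  have hsurj : Function.Surjective M.mulVecLin :=
    (LinearMap.injective_iff_surjective_of_finrank_eq_finrank
      (by simp [Fintype.card_congr e])).mp hM
  obtain ⟨v, hv⟩ := hsurj c
  exact ⟨v, hv, fun w hw => hM (hw.trans hv.symm)⟩

theorem nonempty_kirchhoffRow_equiv {V : Type*} [Fintype V] [LinearOrder V]
    {G T : SimpleGraph V} [DecidableRel G.Adj] (S : V) (hTG : T ≤ G) (hT : T.IsTree) :
    Nonempty (KirchhoffRow G T S ≃ OrientedEdge G) := by
  classical
  have htree : Fintype.card {g : OrientedEdge G // T.Adj g.1.1 g.1.2} + 1 = Fintype.card V := by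
    rw [← hT.card_edgeFinset, ← OrientedEdge.card_eq_card_edgeFinset T]
    congr 1
    exact Fintype.card_congr
      { toFun g := ⟨g.1.1, g.1.2.1, g.2⟩
        invFun g := ⟨⟨g.1, g.2.1, hTG g.2.2⟩, g.2.2⟩ }
  have hle := Fintype.card_subtype_le fun g : OrientedEdge G => T.Adj g.1.1 g.1.2
  refine ⟨Fintype.equivOfCardEq ?_⟩
  rw [Fintype.card_sum, Fintype.card_subtype_compl, Fintype.card_subtype_compl,
    Fintype.card_subtype_eq]
  omega

namespace IsEdgewiseKirchhoffMatrix

open OrientedEdge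

variable {V : Type*} [LinearOrder V] {G T : SimpleGraph V} {S : V}
  {M : Matrix (KirchhoffRow G T S) (OrientedEdge G) ℚ}

theorem row_inl (hM : IsEdgewiseKirchhoffMatrix G T S M) (w : {w : V // w ≠ S}) :
    M (Sum.inl w) = cutVector G {w.1} := by
  funext g
  rw [hM.1, cutVector_singleton_apply]

theorem row_inr (hM : IsEdgewiseKirchhoffMatrix G T S M)
    (f : {e : OrientedEdge G // ¬ T.Adj e.1.1 e.1.2}) {p : T.Walk f.1.1.2 f.1.1.1}
    (hp : p.IsPath) : M (Sum.inr f) = fundamentalCycle f.1 p := by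
  funext g
  rw [hM.2 f g p hp]
  by_cases hgf : g = f.1
  · rw [if_pos hgf, fundamentalCycle_apply_of_not_adj _ _ (hgf ▸ f.2), if_pos hgf]
  · simp only [Prod.mk.eta]
    rw [if_neg hgf, fundamentalCycle, Pi.add_apply, Pi.single_apply, if_neg hgf, zero_add,
      walkFlow_apply_of_isPath hp]

theorem mulVec_injective [Fintype V] [DecidableRel G.Adj]
    (hM : IsEdgewiseKirchhoffMatrix G T S M) (hTG : T ≤ G) (hT : T.IsTree) :
    Function.Injective M.mulVec := by
  classical
  refine (injective_iff_map_eq_zero M.mulVecLin).mpr fun ω hω => ?_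
  have hrow (r : KirchhoffRow G T S) : M r ⬝ᵥ ω = 0 := congrFun hω r
  have hpath (f : {e : OrientedEdge G // ¬ T.Adj e.1.1 e.1.2}) :
      ∃ p : T.Walk f.1.1.2 f.1.1.1, p.IsPath :=
    (hT.connected.preconnected _ _).elim fun p => ⟨p.bypass, p.bypass_isPath⟩
  choose P hP using hpath
  have hcirc : ω ∈ circulations G := mem_circulations_of_forall_ne S fun w hw => by
    simpa [hM.row_inl ⟨w, hw⟩] using hrow (.inl ⟨w, hw⟩)
  have hcycle (f) : fundamentalCycle f.1 (P f) ⬝ᵥ ω = 0 := by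
    simpa [hM.row_inr f (hP f)] using hrow (.inr f)
  have hspan : ω = ∑ f, ω f.1 • fundamentalCycle f.1 (P f) := by
    refine sub_eq_zero.mp (eq_zero_of_mem_circulations_of_isAcyclic hT.isAcyclic
      (sub_mem hcirc (sum_mem fun f _ => Submodule.smul_mem _ _
        (fundamentalCycle_mem_circulations hTG _ _))) fun g hg => ?_)
    simp only [Pi.sub_apply, Finset.sum_apply, Pi.smul_apply,
      fundamentalCycle_apply_of_not_adj _ _ hg, smul_eq_mul, mul_ite, mul_one, mul_zero]
    rw [Finset.sum_eq_single ⟨g, hg⟩ (fun f _ hf => if_neg fun h => hf (Subtype.ext h.symm))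
      (by simp), if_pos rfl, sub_self]
  have hself : ω ⬝ᵥ ω = 0 := by
    nth_rw 1 [hspan]
    simp [sum_dotProduct, smul_dotProduct, hcycle]
  exact dotProduct_self_eq_zero.mp hself

end IsEdgewiseKirchhoffMatrix

theorem edgewiseKirchhoff_invertible_general
    {V : Type*} [Fintype V] [LinearOrder V]
    (G T : SimpleGraph V) [DecidableRel G.Adj] (S : V)
    (hTsub : T ≤ G) (hTtree : T.IsTree)
    (M : Matrix (KirchhoffRow G T S) (OrientedEdge G) ℚ)
    (hM : IsEdgewiseKirchhoffMatrix G T S M) :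
    (∀ e : KirchhoffRow G T S ≃ OrientedEdge G, (M.submatrix e.symm id).det ≠ 0) ∧
      ∀ c : KirchhoffRow G T S → ℚ, ∃! ω : OrientedEdge G → ℚ, M.mulVec ω = c := by
  have hinj := hM.mulVec_injective hTsub hTtree
  obtain ⟨e⟩ := nonempty_kirchhoffRow_equiv S hTsub hTtree
  exact ⟨det_submatrix_ne_zero_of_mulVec_injective hinj,
    existsUnique_mulVec_eq_of_mulVec_injective hinj e⟩

/-- **Invertibility of the edgewise Kirchhoff matrix.**
For a finite connected simple graph `G` with at least two vertices, a pole `S` and a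
spanning tree `T`, the edgewise Kirchhoff matrix `M_{G,S,T}` has nonzero determinant;
consequently, for every right-hand side the corresponding system of `n` linear
equations in the `n` edge variables has a unique solution. -/
theorem edgewiseKirchhoff_invertible
    {V : Type*} [Fintype V] [LinearOrder V]
    (G T : SimpleGraph V) [DecidableRel G.Adj] (S : V)
    (hm : 2 ≤ Fintype.card V) (hG : G.Connected)
    (hTsub : T ≤ G) (hTtree : T.IsTree)
    (M : Matrix (KirchhoffRow G T S) (OrientedEdge G) ℚ)
    (hM : IsEdgewiseKirchhoffMatrix G T S M) :
    (∀ e : KirchhoffRow G T S ≃ OrientedEdge G, (M.submatrix e.symm id).det ≠ 0) ∧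
      ∀ c : KirchhoffRow G T S → ℚ, ∃! ω : OrientedEdge G → ℚ, M.mulVec ω = c :=
  edgewiseKirchhoff_invertible_general G T S hTsub hTtree M hM
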